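/- arXiv:1001.1100 — 2 statements merged into one kernel-verified Lean document; each statement's English description precedes it below -/
import Mathlib

section
/- If n ≥ 2 is an integer such that n mod 840 is not one of {1, 121, 169, 289, 361, 529}, then there exist positive integers a, b, c with 4/n = 1/a + 1/b + 1/c. -/
lemma es_aux (n a b c : ℕ) (hn : 0 < n) (ha : 0 < a) (hb : 0 < b) (hc : 0 < c)
    (h : 4 * (a * b * c) = n * (b * c + a * c + a * b)) :
    (4 : ℚ) / n = 1 / a + 1 / b + 1 / c := by
  have hn' : (n : ℚ) ≠ 0 := Nat.cast_ne_zero.2 hn.ne'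
  have ha' : (a : ℚ) ≠ 0 := Nat.cast_ne_zero.2 ha.ne'
  have hb' : (b : ℚ) ≠ 0 := Nat.cast_ne_zero.2 hb.ne'
  have hc' : (c : ℚ) ≠ 0 := Nat.cast_ne_zero.2 hc.ne'
  have h' : (4 : ℚ) * (a * b * c) = n * (b * c + a * c + a * b) := by
    exact_mod_cast congrArg (Nat.cast : ℕ → ℚ) h
  field_simp
  linear_combination h'

lemma es_crt (r : ℕ) (h1 : r < 840) (h2 : r % 8 = 1) (h3 : r % 3 = 1)
    (h5 : r % 5 = 1 ∨ r % 5 = 4) (h7 : r % 7 = 1 ∨ r % 7 = 2 ∨ r % 7 = 4) :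
    r = 1 ∨ r = 121 ∨ r = 169 ∨ r = 289 ∨ r = 361 ∨ r = 529 := by omega

lemma es_c1 (n : ℕ) (hn : 2 ≤ n) (hc : n % 2 = 0) :
    ∃ a b c : ℕ, 0 < a ∧ 0 < b ∧ 0 < c ∧ (4 : ℚ) / n = 1 / a + 1 / b + 1 / c := by
  obtain ⟨m, rfl⟩ : ∃ m, n = 2 * m := ⟨n / 2, by omega⟩
  refine ⟨m, 2 * m, 2 * m, by omega, ?_, ?_, es_aux _ _ _ _ (by omega) (by omega) ?_ ?_ (by ring)⟩ <;>
    first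
    | omega
    | exact Nat.mul_pos (Nat.mul_pos (by omega) (by omega)) (by omega)
    | exact Nat.mul_pos (by omega) (by omega)

lemma es_c2 (n : ℕ) (hn : 2 ≤ n) (hc : n % 3 = 0) :
    ∃ a b c : ℕ, 0 < a ∧ 0 < b ∧ 0 < c ∧ (4 : ℚ) / n = 1 / a + 1 / b + 1 / c := by
  obtain ⟨m, rfl⟩ : ∃ m, n = 3 * m := ⟨n / 3, by omega⟩
  refine ⟨m, 6 * m, 6 * m, by omega, ?_, ?_, es_aux _ _ _ _ (by omega) (by omega) ?_ ?_ (by ring)⟩ <;>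
    first
    | omega
    | exact Nat.mul_pos (Nat.mul_pos (by omega) (by omega)) (by omega)
    | exact Nat.mul_pos (by omega) (by omega)

lemma es_c3 (n : ℕ) (hn : 2 ≤ n) (hc : n % 3 = 2) :
    ∃ a b c : ℕ, 0 < a ∧ 0 < b ∧ 0 < c ∧ (4 : ℚ) / n = 1 / a + 1 / b + 1 / c := by
  obtain ⟨m, rfl⟩ : ∃ m, n = 3 * m + 2 := ⟨n / 3, by omega⟩
  refine ⟨3 * m + 2, m + 1, (3 * m + 2) * (m + 1), by omega, ?_, ?_, es_aux _ _ _ _ (by omega) (by omega) ?_ ?_ (by ring)⟩ <;>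
    first
    | omega
    | exact Nat.mul_pos (Nat.mul_pos (by omega) (by omega)) (by omega)
    | exact Nat.mul_pos (by omega) (by omega)

lemma es_c4 (n : ℕ) (hn : 2 ≤ n) (hc : n % 4 = 3) :
    ∃ a b c : ℕ, 0 < a ∧ 0 < b ∧ 0 < c ∧ (4 : ℚ) / n = 1 / a + 1 / b + 1 / c := by
  obtain ⟨m, rfl⟩ : ∃ m, n = 4 * m + 3 := ⟨n / 4, by omega⟩
  refine ⟨m + 1, (4 * m + 3) * (2 * m + 2), (4 * m + 3) * (2 * m + 2), by omega, ?_, ?_, es_aux _ _ _ _ (by omega) (by omega) ?_ ?_ (by ring)⟩ <;>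
    first
    | omega
    | exact Nat.mul_pos (Nat.mul_pos (by omega) (by omega)) (by omega)
    | exact Nat.mul_pos (by omega) (by omega)

lemma es_c5 (n : ℕ) (hn : 2 ≤ n) (hc : n % 8 = 5) :
    ∃ a b c : ℕ, 0 < a ∧ 0 < b ∧ 0 < c ∧ (4 : ℚ) / n = 1 / a + 1 / b + 1 / c := by
  obtain ⟨m, rfl⟩ : ∃ m, n = 8 * m + 5 := ⟨n / 8, by omega⟩
  refine ⟨2 * m + 2, (8 * m + 5) * (2 * m + 2), (8 * m + 5) * (m + 1), by omega, ?_, ?_, es_aux _ _ _ _ (by omega) (by omega) ?_ ?_ (by ring)⟩ <;>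
    first
    | omega
    | exact Nat.mul_pos (Nat.mul_pos (by omega) (by omega)) (by omega)
    | exact Nat.mul_pos (by omega) (by omega)

lemma es_c6 (n : ℕ) (hn : 2 ≤ n) (hc : n % 5 = 0) :
    ∃ a b c : ℕ, 0 < a ∧ 0 < b ∧ 0 < c ∧ (4 : ℚ) / n = 1 / a + 1 / b + 1 / c := by
  obtain ⟨m, rfl⟩ : ∃ m, n = 5 * m := ⟨n / 5, by omega⟩
  refine ⟨2 * m, 4 * m, 20 * m, by omega, ?_, ?_, es_aux _ _ _ _ (by omega) (by omega) ?_ ?_ (by ring)⟩ <;>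
    first
    | omega
    | exact Nat.mul_pos (Nat.mul_pos (by omega) (by omega)) (by omega)
    | exact Nat.mul_pos (by omega) (by omega)

lemma es_c7 (n : ℕ) (hn : 2 ≤ n) (hc : n % 7 = 0) :
    ∃ a b c : ℕ, 0 < a ∧ 0 < b ∧ 0 < c ∧ (4 : ℚ) / n = 1 / a + 1 / b + 1 / c := by
  obtain ⟨m, rfl⟩ : ∃ m, n = 7 * m := ⟨n / 7, by omega⟩
  refine ⟨2 * m, 28 * m, 28 * m, by omega, ?_, ?_, es_aux _ _ _ _ (by omega) (by omega) ?_ ?_ (by ring)⟩ <;>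
    first
    | omega
    | exact Nat.mul_pos (Nat.mul_pos (by omega) (by omega)) (by omega)
    | exact Nat.mul_pos (by omega) (by omega)

lemma es_c8 (n : ℕ) (hn : 2 ≤ n) (hc : n % 7 = 3) :
    ∃ a b c : ℕ, 0 < a ∧ 0 < b ∧ 0 < c ∧ (4 : ℚ) / n = 1 / a + 1 / b + 1 / c := by
  obtain ⟨m, rfl⟩ : ∃ m, n = 7 * m + 3 := ⟨n / 7, by omega⟩
  refine ⟨2 * m + 1, 2 * (7 * m + 3) * (2 * m + 1), 2 * (7 * m + 3), by omega, ?_, ?_, es_aux _ _ _ _ (by omega) (by omega) ?_ ?_ (by ring)⟩ <;>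
    first
    | omega
    | exact Nat.mul_pos (Nat.mul_pos (by omega) (by omega)) (by omega)
    | exact Nat.mul_pos (by omega) (by omega)

lemma es_c9 (n : ℕ) (hn : 2 ≤ n) (hc : n % 7 = 5) :
    ∃ a b c : ℕ, 0 < a ∧ 0 < b ∧ 0 < c ∧ (4 : ℚ) / n = 1 / a + 1 / b + 1 / c := by
  obtain ⟨m, rfl⟩ : ∃ m, n = 7 * m + 5 := ⟨n / 7, by omega⟩
  refine ⟨2 * m + 2, (7 * m + 5) * (m + 1), 2 * (7 * m + 5), by omega, ?_, ?_, es_aux _ _ _ _ (by omega) (by omega) ?_ ?_ (by ring)⟩ <;>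
    first
    | omega
    | exact Nat.mul_pos (Nat.mul_pos (by omega) (by omega)) (by omega)
    | exact Nat.mul_pos (by omega) (by omega)

lemma es_c10 (n : ℕ) (hn : 2 ≤ n) (hc : n % 7 = 6) :
    ∃ a b c : ℕ, 0 < a ∧ 0 < b ∧ 0 < c ∧ (4 : ℚ) / n = 1 / a + 1 / b + 1 / c := by
  obtain ⟨m, rfl⟩ : ∃ m, n = 7 * m + 6 := ⟨n / 7, by omega⟩
  refine ⟨2 * m + 2, 2 * (7 * m + 6) * (m + 1), 2 * (7 * m + 6), by omega, ?_, ?_, es_aux _ _ _ _ (by omega) (by omega) ?_ ?_ (by ring)⟩ <;>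
    first
    | omega
    | exact Nat.mul_pos (Nat.mul_pos (by omega) (by omega)) (by omega)
    | exact Nat.mul_pos (by omega) (by omega)

lemma es_c11 (n : ℕ) (hn : 2 ≤ n) (hc : n % 3 = 1 ∧ n % 5 = 2) :
    ∃ a b c : ℕ, 0 < a ∧ 0 < b ∧ 0 < c ∧ (4 : ℚ) / n = 1 / a + 1 / b + 1 / c := by
  obtain ⟨m, rfl⟩ : ∃ m, n = 15 * m + 7 := ⟨n / 15, by omega⟩
  refine ⟨4 * m + 2, 4 * (15 * m + 7) * (2 * m + 1), 4 * (15 * m + 7), by omega, ?_, ?_, es_aux _ _ _ _ (by omega) (by omega) ?_ ?_ (by ring)⟩ <;>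
    first
    | omega
    | exact Nat.mul_pos (Nat.mul_pos (by omega) (by omega)) (by omega)
    | exact Nat.mul_pos (by omega) (by omega)

lemma es_c12 (n : ℕ) (hn : 2 ≤ n) (hc : n % 3 = 1 ∧ n % 5 = 3) :
    ∃ a b c : ℕ, 0 < a ∧ 0 < b ∧ 0 < c ∧ (4 : ℚ) / n = 1 / a + 1 / b + 1 / c := by
  obtain ⟨m, rfl⟩ : ∃ m, n = 15 * m + 13 := ⟨n / 15, by omega⟩
  refine ⟨4 * m + 4, 2 * (15 * m + 13) * (m + 1), 4 * (15 * m + 13), by omega, ?_, ?_, es_aux _ _ _ _ (by omega) (by omega) ?_ ?_ (by ring)⟩ <;>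
    first
    | omega
    | exact Nat.mul_pos (Nat.mul_pos (by omega) (by omega)) (by omega)
    | exact Nat.mul_pos (by omega) (by omega)

lemma es_tail (n : ℕ) (e8 : n % 8 = 1) (e3 : n % 3 = 1)
    (e5 : n % 5 = 1 ∨ n % 5 = 4) (e7 : n % 7 = 1 ∨ n % 7 = 2 ∨ n % 7 = 4)
    (q1 : n % 840 ≠ 1) (q2 : n % 840 ≠ 121) (q3 : n % 840 ≠ 169)
    (q4 : n % 840 ≠ 289) (q5 : n % 840 ≠ 361) (q6 : n % 840 ≠ 529) : False := by
  have m3 := Nat.mod_mod_of_dvd n (show 3 ∣ 840 by norm_num)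
  have m5 := Nat.mod_mod_of_dvd n (show 5 ∣ 840 by norm_num)
  have m7 := Nat.mod_mod_of_dvd n (show 7 ∣ 840 by norm_num)
  have m8 := Nat.mod_mod_of_dvd n (show 8 ∣ 840 by norm_num)
  have := es_crt (n % 840) (Nat.mod_lt _ (by norm_num))
    (by rw [m8]; exact e8) (by rw [m3]; exact e3) (by rw [m5]; exact e5) (by rw [m7]; exact e7)
  rcases this with h | h | h | h | h | h <;> simp [h] at q1 q2 q3 q4 q5 q6

set_option maxHeartbeats 1000000 in
theorem stmt_12 (n : ℕ) (hn : 2 ≤ n)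
    (h : n % 840 ∉ ({1, 121, 169, 289, 361, 529} : Set ℕ)) :
    ∃ a b c : ℕ, 0 < a ∧ 0 < b ∧ 0 < c ∧ (4 : ℚ) / n = 1 / a + 1 / b + 1 / c := by
  simp only [Set.mem_insert_iff, Set.mem_singleton_iff, not_or] at h
  by_cases h_c1 : n % 2 = 0
  · exact es_c1 n hn h_c1
  by_cases h_c2 : n % 3 = 0
  · exact es_c2 n hn h_c2
  by_cases h_c3 : n % 3 = 2
  · exact es_c3 n hn h_c3
  by_cases h_c4 : n % 4 = 3
  · exact es_c4 n hn h_c4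
  by_cases h_c5 : n % 8 = 5
  · exact es_c5 n hn h_c5
  by_cases h_c6 : n % 5 = 0
  · exact es_c6 n hn h_c6
  by_cases h_c7 : n % 7 = 0
  · exact es_c7 n hn h_c7
  by_cases h_c8 : n % 7 = 3
  · exact es_c8 n hn h_c8
  by_cases h_c9 : n % 7 = 5
  · exact es_c9 n hn h_c9
  by_cases h_c10 : n % 7 = 6
  · exact es_c10 n hn h_c10
  by_cases h_c11 : n % 3 = 1 ∧ n % 5 = 2
  · exact es_c11 n hn h_c11
  by_cases h_c12 : n % 3 = 1 ∧ n % 5 = 3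
  · exact es_c12 n hn h_c12
  exfalso
  have e3 : n % 3 = 1 := by
    clear h h_c1 h_c4 h_c5 h_c6 h_c7 h_c8 h_c9 h_c10 h_c11 h_c12; omega
  have e8 : n % 8 = 1 := by
    clear h h_c2 h_c3 h_c6 h_c7 h_c8 h_c9 h_c10 h_c11 h_c12; omega
  have e5 : n % 5 = 1 ∨ n % 5 = 4 := by
    clear h h_c1 h_c4 h_c5 h_c7 h_c8 h_c9 h_c10; omega
  have e7 : n % 7 = 1 ∨ n % 7 = 2 ∨ n % 7 = 4 := by
    clear h h_c1 h_c2 h_c3 h_c4 h_c5 h_c6 h_c11 h_c12; omega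
  exact es_tail n e8 e3 e5 e7 h.1 h.2.1 h.2.2.1 h.2.2.2.1 h.2.2.2.2.1 h.2.2.2.2.2
end

section
/- If n ≥ 2 is an integer such that n mod 1320 is not one of {1, 49, 169, 289, 361, 529, 841, 961, 721, 1201, 889, 1081}, then there exist positive integers a, b, c with 4/n = 1/a + 1/b + 1/c. -/
set_option maxRecDepth 40000

private lemma es_key (n a b c : ℕ) (hn : 0 < n) (ha : 0 < a) (hb : 0 < b) (hc : 0 < c)
    (h : 4 * (a * b * c) = n * (b * c + (a * c + a * b))) :
    ∃ a' b' c' : ℕ, 0 < a' ∧ 0 < b' ∧ 0 < c' ∧ (4 : ℚ) / n = 1 / a' + 1 / b' + 1 / c' := by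
  refine ⟨a, b, c, ha, hb, hc, ?_⟩
  have hn' : (n : ℚ) ≠ 0 := Nat.cast_ne_zero.mpr hn.ne'
  have ha' : (a : ℚ) ≠ 0 := Nat.cast_ne_zero.mpr ha.ne'
  have hb' : (b : ℚ) ≠ 0 := Nat.cast_ne_zero.mpr hb.ne'
  have hc' : (c : ℚ) ≠ 0 := Nat.cast_ne_zero.mpr hc.ne'
  have h' : (4 : ℚ) * (a * b * c) = n * (b * c + (a * c + a * b)) := by
    exact_mod_cast congrArg (Nat.cast : ℕ → ℚ) h
  field_simp
  linear_combination h'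

private lemma es_cover (r : ℕ) (h0 : r < 1320) (e1 : r ≠ 1) (e2 : r ≠ 49) (e3 : r ≠ 169) (e4 : r ≠ 289) (e5 : r ≠ 361) (e6 : r ≠ 529) (e7 : r ≠ 841) (e8 : r ≠ 961) (e9 : r ≠ 721) (e10 : r ≠ 1201) (e11 : r ≠ 889) (e12 : r ≠ 1081) :
    (r % 2 = 0 ∨ r % 3 = 0 ∨ r % 3 = 2 ∨ r % 4 = 3 ∨ r % 8 = 5 ∨ r % 5 = 0 ∨ r % 11 = 0 ∨
      r % 20 = 13 ∨ r % 20 = 17 ∨ r = 241 ∨ r = 409 ∨ r = 481 ∨ r = 601 ∨ r = 769 ∨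
      r = 1009 ∨ r = 1129 ∨ r = 1249) := by
  rcases (by omega : r % 24 = 1 ∨ (r % 2 = 0 ∨ r % 3 = 0 ∨ r % 3 = 2 ∨ r % 4 = 3 ∨ r % 8 = 5)) with h24 | hA
  · obtain ⟨q, hq, rfl⟩ : ∃ q, q < 55 ∧ r = 24 * q + 1 := ⟨r / 24, by omega, by omega⟩
    interval_cases q <;> omega
  · tauto

set_option maxHeartbeats 4000000 in
theorem stmt_15 (n : ℕ) (hn : 2 ≤ n)
    (h : n % 1320 ∉ ({1, 49, 169, 289, 361, 529, 841, 961, 721, 1201, 889, 1081} : Set ℕ)) :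
    ∃ a b c : ℕ, 0 < a ∧ 0 < b ∧ 0 < c ∧ (4 : ℚ) / n = 1 / a + 1 / b + 1 / c := by
  simp only [Set.mem_insert_iff, Set.mem_singleton_iff, not_or] at h
  obtain ⟨h1, h2, h3, h4, h5, h6, h7, h8, h9, h10, h11, h12⟩ := h
  have hlt : n % 1320 < 1320 := Nat.mod_lt _ (by norm_num)
  have d2 : n % 1320 % 2 = n % 2 := Nat.mod_mod_of_dvd n (by norm_num)
  have d3 : n % 1320 % 3 = n % 3 := Nat.mod_mod_of_dvd n (by norm_num)
  have d4 : n % 1320 % 4 = n % 4 := Nat.mod_mod_of_dvd n (by norm_num)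
  have d8 : n % 1320 % 8 = n % 8 := Nat.mod_mod_of_dvd n (by norm_num)
  have d5 : n % 1320 % 5 = n % 5 := Nat.mod_mod_of_dvd n (by norm_num)
  have d11 : n % 1320 % 11 = n % 11 := Nat.mod_mod_of_dvd n (by norm_num)
  have d20 : n % 1320 % 20 = n % 20 := Nat.mod_mod_of_dvd n (by norm_num)
  rcases es_cover _ hlt h1 h2 h3 h4 h5 h6 h7 h8 h9 h10 h11 h12 with
    hk0|hk1|hk2|hk3|hk4|hk5|hk6|hk7|hk8|hk9|hk10|hk11|hk12|hk13|hk14|hk15|hk16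
  · rw [d2] at hk0
    clear h1 h2 h3 h4 h5 h6 h7 h8 h9 h10 h11 h12 hlt d2 d3 d4 d8 d5 d11 d20
    obtain ⟨k, rfl⟩ : ∃ k, n = 2 * k := ⟨n / 2, by omega⟩
    exact es_key _ (1 * k) (2 * k) (2 * k)
      (by omega) (by omega) (by omega) (by omega) (by ring)
  · rw [d3] at hk1
    clear h1 h2 h3 h4 h5 h6 h7 h8 h9 h10 h11 h12 hlt d2 d3 d4 d8 d5 d11 d20
    obtain ⟨k, rfl⟩ : ∃ k, n = 3 * k := ⟨n / 3, by omega⟩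
    exact es_key _ (1 * k) (6 * k) (6 * k)
      (by omega) (by omega) (by omega) (by omega) (by ring)
  · rw [d3] at hk2
    clear h1 h2 h3 h4 h5 h6 h7 h8 h9 h10 h11 h12 hlt d2 d3 d4 d8 d5 d11 d20
    obtain ⟨k, rfl⟩ : ∃ k, n = 3 * k + 2 := ⟨n / 3, by omega⟩
    exact es_key _ (1 + 1 * k) (2 + 3 * k) (2 + 5 * k + 3 * k ^ 2)
      (by omega) (by positivity) (by positivity) (by positivity) (by ring)
  · rw [d4] at hk3
    clear h1 h2 h3 h4 h5 h6 h7 h8 h9 h10 h11 h12 hlt d2 d3 d4 d8 d5 d11 d20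
    obtain ⟨k, rfl⟩ : ∃ k, n = 4 * k + 3 := ⟨n / 4, by omega⟩
    exact es_key _ (1 + 1 * k) (6 + 14 * k + 8 * k ^ 2) (6 + 14 * k + 8 * k ^ 2)
      (by omega) (by positivity) (by positivity) (by positivity) (by ring)
  · rw [d8] at hk4
    clear h1 h2 h3 h4 h5 h6 h7 h8 h9 h10 h11 h12 hlt d2 d3 d4 d8 d5 d11 d20
    obtain ⟨k, rfl⟩ : ∃ k, n = 8 * k + 5 := ⟨n / 8, by omega⟩
    exact es_key _ (2 + 2 * k) (5 + 13 * k + 8 * k ^ 2) (10 + 26 * k + 16 * k ^ 2)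
      (by omega) (by positivity) (by positivity) (by positivity) (by ring)
  · rw [d5] at hk5
    clear h1 h2 h3 h4 h5 h6 h7 h8 h9 h10 h11 h12 hlt d2 d3 d4 d8 d5 d11 d20
    obtain ⟨k, rfl⟩ : ∃ k, n = 5 * k := ⟨n / 5, by omega⟩
    exact es_key _ (2 * k) (4 * k) (20 * k)
      (by omega) (by omega) (by omega) (by omega) (by ring)
  · rw [d11] at hk6
    clear h1 h2 h3 h4 h5 h6 h7 h8 h9 h10 h11 h12 hlt d2 d3 d4 d8 d5 d11 d20
    obtain ⟨k, rfl⟩ : ∃ k, n = 11 * k := ⟨n / 11, by omega⟩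
    exact es_key _ (3 * k) (66 * k) (66 * k)
      (by omega) (by omega) (by omega) (by omega) (by ring)
  · rw [d20] at hk7
    clear h1 h2 h3 h4 h5 h6 h7 h8 h9 h10 h11 h12 hlt d2 d3 d4 d8 d5 d11 d20
    obtain ⟨k, rfl⟩ : ∃ k, n = 20 * k + 13 := ⟨n / 20, by omega⟩
    exact es_key _ (5 + 5 * k) (10 + 25 * k + 15 * k ^ 2) (130 + 395 * k + 300 * k ^ 2)
      (by omega) (by positivity) (by positivity) (by positivity) (by ring)
  · rw [d20] at hk8
    clear h1 h2 h3 h4 h5 h6 h7 h8 h9 h10 h11 h12 hlt d2 d3 d4 d8 d5 d11 d20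
    obtain ⟨k, rfl⟩ : ∃ k, n = 20 * k + 17 := ⟨n / 20, by omega⟩
    exact es_key _ (5 + 5 * k) (30 + 65 * k + 35 * k ^ 2) (510 + 1195 * k + 700 * k ^ 2)
      (by omega) (by positivity) (by positivity) (by positivity) (by ring)
  · 
    clear h1 h2 h3 h4 h5 h6 h7 h8 h9 h10 h11 h12 hlt d2 d3 d4 d8 d5 d11 d20
    obtain ⟨k, rfl⟩ : ∃ k, n = 1320 * k + 241 := ⟨n / 1320, by omega⟩
    exact es_key _ (66 + 330 * k) (693 + 7260 * k + 18975 * k ^ 2) (334026 + 3658710 * k + 10018800 * k ^ 2)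
      (by omega) (by positivity) (by positivity) (by positivity) (by ring)
  · 
    clear h1 h2 h3 h4 h5 h6 h7 h8 h9 h10 h11 h12 hlt d2 d3 d4 d8 d5 d11 d20
    obtain ⟨k, rfl⟩ : ∃ k, n = 1320 * k + 409 := ⟨n / 1320, by omega⟩
    exact es_key _ (110 + 330 * k) (1452 + 9042 * k + 14058 * k ^ 2) (2969340 + 19166070 * k + 30927600 * k ^ 2)
      (by omega) (by positivity) (by positivity) (by positivity) (by ring)
  · 
    clear h1 h2 h3 h4 h5 h6 h7 h8 h9 h10 h11 h12 hlt d2 d3 d4 d8 d5 d11 d20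
    obtain ⟨k, rfl⟩ : ∃ k, n = 1320 * k + 481 := ⟨n / 1320, by omega⟩
    exact es_key _ (121 + 330 * k) (19844 + 108570 * k + 148500 * k ^ 2) (867724 + 4762230 * k + 6534000 * k ^ 2)
      (by omega) (by positivity) (by positivity) (by positivity) (by ring)
  · 
    clear h1 h2 h3 h4 h5 h6 h7 h8 h9 h10 h11 h12 hlt d2 d3 d4 d8 d5 d11 d20
    obtain ⟨k, rfl⟩ : ∃ k, n = 1320 * k + 601 := ⟨n / 1320, by omega⟩
    exact es_key _ (154 + 330 * k) (6314 + 27390 * k + 29700 * k ^ 2) (271051 + 1190310 * k + 1306800 * k ^ 2)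
      (by omega) (by positivity) (by positivity) (by positivity) (by ring)
  · 
    clear h1 h2 h3 h4 h5 h6 h7 h8 h9 h10 h11 h12 hlt d2 d3 d4 d8 d5 d11 d20
    obtain ⟨k, rfl⟩ : ∃ k, n = 1320 * k + 769 := ⟨n / 1320, by omega⟩
    exact es_key _ (198 + 330 * k) (6633 + 22440 * k + 18975 * k ^ 2) (3400518 + 11673750 * k + 10018800 * k ^ 2)
      (by omega) (by positivity) (by positivity) (by positivity) (by ring)
  · 
    clear h1 h2 h3 h4 h5 h6 h7 h8 h9 h10 h11 h12 hlt d2 d3 d4 d8 d5 d11 d20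
    obtain ⟨k, rfl⟩ : ∃ k, n = 1320 * k + 1009 := ⟨n / 1320, by omega⟩
    exact es_key _ (253 + 330 * k) (87032 + 227370 * k + 148500 * k ^ 2) (3818056 + 9989430 * k + 6534000 * k ^ 2)
      (by omega) (by positivity) (by positivity) (by positivity) (by ring)
  · 
    clear h1 h2 h3 h4 h5 h6 h7 h8 h9 h10 h11 h12 hlt d2 d3 d4 d8 d5 d11 d20
    obtain ⟨k, rfl⟩ : ∃ k, n = 1320 * k + 1129 := ⟨n / 1320, by omega⟩
    exact es_key _ (286 + 330 * k) (22022 + 51150 * k + 29700 * k ^ 2) (956263 + 2235750 * k + 1306800 * k ^ 2)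
      (by omega) (by positivity) (by positivity) (by positivity) (by ring)
  · 
    clear h1 h2 h3 h4 h5 h6 h7 h8 h9 h10 h11 h12 hlt d2 d3 d4 d8 d5 d11 d20
    obtain ⟨k, rfl⟩ : ∃ k, n = 1320 * k + 1249 := ⟨n / 1320, by omega⟩
    exact es_key _ (330 + 330 * k) (5808 + 11946 * k + 6138 * k ^ 2) (12090320 + 25554870 * k + 13503600 * k ^ 2)
      (by omega) (by positivity) (by positivity) (by positivity) (by ring)
end
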